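/- Let 0 < ρ < R be real numbers, θ ∈ (0, π/2), 0 < r < R − ρ, C ≥ 0, and let β < 1 be real. Suppose S : ℂ → ℂ is complex-differentiable on the Δ-domain Δ(ρ,R,θ) and satisfies |S(z)| ≤ C·|1 − z/ρ|^(−β) for all z ∈ U(r,θ). Then there exist a function T₀ that is complex-differentiable on U(r,θ) with T₀'(z) = S(z) for all z ∈ U(r,θ), and a constant C' ≥ 0, such that |T₀(z)| ≤ C'·|1 − z/ρ|^(1−β) for all z ∈ U(r,θ). -/

import Mathlib

open Complex Set

/-- The Δ-domain Δ(ρ,R,θ): complex numbers `z` with `|z| < R` and `|arg (z - ρ)| > θ`. -/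
noncomputable def deltaDomain (ρ R θ : ℝ) : Set ℂ :=
  {z : ℂ | ‖z‖ < R ∧ θ < |Complex.arg (z - (ρ : ℂ))|}

/-- `U(r,θ) = Δ(ρ,R,θ) ∩ {z : |z − ρ| < r}`. -/
noncomputable def uDomain (ρ R θ r : ℝ) : Set ℂ :=
  deltaDomain ρ R θ ∩ {z : ℂ | ‖z - (ρ : ℂ)‖ < r}

private lemma arg_lt_iff {θ : ℝ} (hθ0 : 0 < θ) (hθπ : θ < Real.pi) (w : ℂ) :
    θ < |Complex.arg w| ↔ w.re < ‖w‖ * Real.cos θ := by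
  rcases eq_or_ne w 0 with rfl | hw
  · simp [Complex.arg_zero, hθ0.not_gt]
  · have habs : 0 < ‖w‖ := norm_pos_iff.mpr hw
    have h1 : |Complex.arg w| ≤ Real.pi := Complex.abs_arg_le_pi w
    have key := (Real.strictAntiOn_cos.lt_iff_gt
      (⟨abs_nonneg _, h1⟩ : |Complex.arg w| ∈ Icc 0 Real.pi)
      (⟨hθ0.le, hθπ.le⟩ : θ ∈ Icc 0 Real.pi))
    rw [← key, Real.cos_abs, Complex.cos_arg hw, div_lt_iff₀ habs, mul_comm]

private lemma mem_delta_iff {ρ R θ : ℝ} (hθ0 : 0 < θ) (hθπ : θ < Real.pi) (z : ℂ) :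
    z ∈ deltaDomain ρ R θ ↔
      ‖z‖ < R ∧ (z - (ρ : ℂ)).re < ‖z - (ρ : ℂ)‖ * Real.cos θ := by
  unfold deltaDomain
  rw [mem_setOf_eq, arg_lt_iff hθ0 hθπ]

private lemma isOpen_delta {ρ R θ : ℝ} (hθ0 : 0 < θ) (hθπ : θ < Real.pi) :
    IsOpen (deltaDomain ρ R θ) := by
  have h : deltaDomain ρ R θ = {z : ℂ | ‖z‖ < R} ∩
      {z : ℂ | (z - (ρ : ℂ)).re < ‖z - (ρ : ℂ)‖ * Real.cos θ} := by
    ext z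
    rw [mem_inter_iff, mem_delta_iff hθ0 hθπ, mem_setOf_eq, mem_setOf_eq]
  rw [h]
  exact (isOpen_lt continuous_norm continuous_const).inter
    (isOpen_lt (Complex.continuous_re.comp (continuous_id.sub continuous_const))
      ((continuous_norm.comp (continuous_id.sub continuous_const)).mul continuous_const))

set_option maxHeartbeats 1000000 in
theorem stmt_5 (ρ R θ r C β : ℝ)
    (hρ : 0 < ρ) (hρR : ρ < R) (hθ : θ ∈ Set.Ioo 0 (Real.pi / 2))
    (hr0 : 0 < r) (hrR : r < R - ρ) (hC : 0 ≤ C) (hβ : β < 1)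
    (S : ℂ → ℂ)
    (hdiff : DifferentiableOn ℂ S (deltaDomain ρ R θ))
    (hbound : ∀ z ∈ uDomain ρ R θ r,
      ‖S z‖ ≤ C * ‖1 - z / (ρ : ℂ)‖ ^ (-β)) :
    ∃ T₀ : ℂ → ℂ, (∀ z ∈ uDomain ρ R θ r, HasDerivAt T₀ (S z) z) ∧
      ∃ C' : ℝ, 0 ≤ C' ∧ ∀ z ∈ uDomain ρ R θ r,
        ‖T₀ z‖ ≤ C' * ‖1 - z / (ρ : ℂ)‖ ^ (1 - β) := by
  obtain ⟨hθ0, hθ2⟩ := hθ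
  have hπ := Real.pi_pos
  have hθπ : θ < Real.pi := by linarith
  have hcospos : 0 < Real.cos θ := Real.cos_pos_of_mem_Ioo ⟨by linarith, hθ2⟩
  have hcos1 : Real.cos θ ≤ 1 := Real.cos_le_one θ
  have hΔopen : IsOpen (deltaDomain ρ R θ) := isOpen_delta hθ0 hθπ
  have hUsub : uDomain ρ R θ r ⊆ deltaDomain ρ R θ := inter_subset_left
  have hρC : (ρ : ℂ) ≠ 0 := by exact_mod_cast hρ.ne'
  -- |1 - z/ρ| = |z - ρ|/ρ
  have habs1 : ∀ z : ℂ, ‖1 - z / (ρ : ℂ)‖ = ‖z - (ρ : ℂ)‖ / ρ := by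
    intro z
    have h : 1 - z / (ρ : ℂ) = -((z - ρ) / ρ) := by field_simp; ring
    rw [h, norm_neg, norm_div, Complex.norm_real, Real.norm_eq_abs, abs_of_pos hρ]
  have hUiff : ∀ z : ℂ, z ∈ uDomain ρ R θ r ↔
      ‖z‖ < R ∧ (z - (ρ : ℂ)).re < ‖z - (ρ : ℂ)‖ * Real.cos θ ∧
        ‖z - (ρ : ℂ)‖ < r := by
    intro z
    unfold uDomain
    rw [mem_inter_iff, mem_delta_iff hθ0 hθπ, mem_setOf_eq]
    tauto
  -- points on the open ray from ρ to z stay in U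
  have hray : ∀ z ∈ uDomain ρ R θ r, ∀ t : ℝ, 0 < t → t ≤ 1 →
      (ρ : ℂ) + (t : ℂ) * (z - ρ) ∈ uDomain ρ R θ r := by
    intro z hz t ht0 ht1
    rw [hUiff] at hz ⊢
    obtain ⟨h1, h2, h3⟩ := hz
    have hsub : (ρ : ℂ) + (t : ℂ) * (z - ρ) - ρ = (t : ℂ) * (z - ρ) := by ring
    have habs : ‖(t : ℂ) * (z - ρ)‖ = t * ‖z - ρ‖ := by
      rw [norm_mul, Complex.norm_real, Real.norm_eq_abs, abs_of_pos ht0]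
    have hre : ((t : ℂ) * (z - ρ)).re = t * (z - ρ).re := by
      simp [Complex.mul_re, Complex.ofReal_re, Complex.ofReal_im]
    refine ⟨?_, ?_, ?_⟩
    · have := norm_add_le ((ρ : ℂ)) ((t : ℂ) * (z - ρ))
      rw [habs, Complex.norm_real, Real.norm_eq_abs, abs_of_pos hρ] at this
      nlinarith [norm_nonneg (z - ρ)]
    · rw [hsub, habs, hre]
      nlinarith
    · rw [hsub, habs]
      nlinarith [norm_nonneg (z - ρ)]
  have hSband : ∀ z ∈ uDomain ρ R θ r,
      ‖S z‖ ≤ C * (‖z - (ρ : ℂ)‖ / ρ) ^ (-β) := by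
    intro z hz
    have h := hbound z hz
    rwa [habs1] at h
  set F : ℂ → ℝ → ℂ := fun z t => S ((ρ : ℂ) + (t : ℂ) * (z - ρ)) with hF
  have hSc : ContinuousOn S (deltaDomain ρ R θ) := hdiff.continuousOn
  have hFcont : ∀ z ∈ uDomain ρ R θ r, ContinuousOn (F z) (Ioc (0 : ℝ) 1) := by
    intro z hz
    apply hSc.comp
    · exact (continuous_const.add (Complex.continuous_ofReal.mul continuous_const)).continuousOn
    · intro t ht
      exact hUsub (hray z hz t ht.1 ht.2)
  have hFmeas : ∀ z ∈ uDomain ρ R θ r,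
      MeasureTheory.AEStronglyMeasurable (F z) (MeasureTheory.volume.restrict (Set.uIoc (0 : ℝ) 1)) := by
    intro z hz
    rw [Set.uIoc_of_le (zero_le_one' ℝ)]
    exact (hFcont z hz).aestronglyMeasurable measurableSet_Ioc
  have hFbound : ∀ z ∈ uDomain ρ R θ r, ∀ t ∈ Ioc (0 : ℝ) 1,
      ‖F z t‖ ≤ C * (‖z - (ρ : ℂ)‖ / ρ) ^ (-β) * t ^ (-β) := by
    intro z hz t ht
    have hmem := hray z hz t ht.1 ht.2
    have h := hSband _ hmem
    have hsub : (ρ : ℂ) + (t : ℂ) * (z - ρ) - ρ = (t : ℂ) * (z - ρ) := by ring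
    rw [hsub, norm_mul, Complex.norm_real, Real.norm_eq_abs, abs_of_pos ht.1] at h
    calc ‖F z t‖ ≤ C * (t * ‖z - ρ‖ / ρ) ^ (-β) := h
    _ = C * (‖z - (ρ : ℂ)‖ / ρ) ^ (-β) * t ^ (-β) := by
        rw [show t * ‖z - (ρ:ℂ)‖ / ρ = t * (‖z - (ρ:ℂ)‖ / ρ) by ring,
          Real.mul_rpow ht.1.le (by positivity)]
        ring
  have hrpow_int : IntervalIntegrable (fun t : ℝ => t ^ (-β)) MeasureTheory.volume 0 1 :=
    intervalIntegral.intervalIntegrable_rpow' (by linarith)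
  have hFint : ∀ z ∈ uDomain ρ R θ r, IntervalIntegrable (F z) MeasureTheory.volume 0 1 := by
    intro z hz
    rw [intervalIntegrable_iff]
    have hbd : ∀ᵐ t ∂(MeasureTheory.volume.restrict (Set.uIoc (0 : ℝ) 1)),
        ‖F z t‖ ≤ C * (‖z - (ρ : ℂ)‖ / ρ) ^ (-β) * t ^ (-β) := by
      rw [Set.uIoc_of_le (zero_le_one' ℝ), MeasureTheory.ae_restrict_iff' measurableSet_Ioc]
      exact MeasureTheory.ae_of_all _ (fun t ht => hFbound z hz t ht)
    exact MeasureTheory.Integrable.mono'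
      (intervalIntegrable_iff.1 (hrpow_int.const_mul (C * (‖z - (ρ:ℂ)‖ / ρ) ^ (-β))))
      (hFmeas z hz) hbd
  set F' : ℂ → ℝ → ℂ := fun z t => (t : ℂ) * deriv S ((ρ : ℂ) + (t : ℂ) * (z - ρ)) with hF'
  set T₀ : ℂ → ℂ := fun z => (z - ρ) * ∫ t in (0 : ℝ)..1, F z t with hT
  have hderivS_cont : ContinuousOn (deriv S) (deltaDomain ρ R θ) :=
    ((hdiff.analyticOnNhd hΔopen).deriv).continuousOn
  refine ⟨T₀, ?_, ?_⟩
  · -- derivative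
    intro z₀ hz₀
    obtain ⟨hz₀R, hz₀cone, hz₀r⟩ := (hUiff z₀).1 hz₀
    have hw₀ne : z₀ - (ρ : ℂ) ≠ 0 := by
      intro h
      rw [h] at hz₀cone
      simp at hz₀cone
    set a : ℝ := ‖z₀ - (ρ : ℂ)‖ with ha
    have ha0 : 0 < a := norm_pos_iff.mpr hw₀ne
    set m : ℝ := a * Real.cos θ - (z₀ - (ρ : ℂ)).re with hm
    have hm0 : 0 < m := sub_pos.2 hz₀cone
    set ε : ℝ := min (m / 8) (min ((r - a) / 8) (a / 8)) with hε
    have hε0 : 0 < ε := lt_min (by linarith) (lt_min (by linarith) (by linarith))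
    have hεm : ε ≤ m / 8 := min_le_left _ _
    have hεr : ε ≤ (r - a) / 8 := (min_le_right _ _).trans (min_le_left _ _)
    have hεa : ε ≤ a / 8 := (min_le_right _ _).trans (min_le_right _ _)
    -- ball–cone geometry
    have hball : ∀ z ∈ Metric.ball z₀ ε, ∀ t : ℝ, 0 < t → t ≤ 1 → ∀ v : ℂ,
        ‖v‖ ≤ t * ε →
        ((ρ : ℂ) + (t : ℂ) * (z - ρ) + v ∈ uDomain ρ R θ r ∧
          t * (a / 2) ≤ ‖(t : ℂ) * (z - ρ) + v‖ ∧
          ‖(t : ℂ) * (z - ρ) + v‖ ≤ t * (a + 2 * ε)) := by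
      intro z hzb t ht0 ht1 v hv
      rw [Metric.mem_ball, Complex.dist_eq] at hzb
      have hww₀ : ‖(z - (ρ:ℂ)) - (z₀ - (ρ:ℂ))‖ < ε := by
        rw [show (z - (ρ:ℂ)) - (z₀ - (ρ:ℂ)) = z - z₀ by ring]
        exact hzb
      have htri := abs_norm_sub_norm_le (z - (ρ:ℂ)) (z₀ - (ρ:ℂ))
      rw [abs_sub_le_iff] at htri
      have hwa_lo : a - ε ≤ ‖z - (ρ:ℂ)‖ := by linarith [htri.2]
      have hwa_hi : ‖z - (ρ:ℂ)‖ ≤ a + ε := by linarith [htri.1]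
      have hwre : (z - (ρ:ℂ)).re < (z₀ - (ρ:ℂ)).re + ε := by
        have h1 : ((z - (ρ:ℂ)) - (z₀ - (ρ:ℂ))).re ≤ ‖(z - (ρ:ℂ)) - (z₀ - (ρ:ℂ))‖ :=
          Complex.re_le_norm _
        have h2 : ((z - (ρ:ℂ)) - (z₀ - (ρ:ℂ))).re = (z - (ρ:ℂ)).re - (z₀ - (ρ:ℂ)).re := by
          simp [Complex.sub_re]
        linarith
      have htw : ‖(t : ℂ) * (z - ρ)‖ = t * ‖z - (ρ:ℂ)‖ := by
        rw [norm_mul, Complex.norm_real, Real.norm_eq_abs, abs_of_pos ht0]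
      have hu_hi : ‖(t : ℂ) * (z - ρ) + v‖ ≤ t * ‖z - (ρ:ℂ)‖ + t * ε := by
        have := norm_add_le ((t : ℂ) * (z - ρ)) v
        rw [htw] at this
        linarith
      have hu_lo : t * ‖z - (ρ:ℂ)‖ - t * ε ≤ ‖(t : ℂ) * (z - ρ) + v‖ := by
        have htri2 := abs_norm_sub_norm_le ((t : ℂ) * (z - ρ) + v) ((t : ℂ) * (z - ρ))
        rw [show ((t : ℂ) * (z - ρ) + v) - ((t : ℂ) * (z - ρ)) = v by ring, abs_sub_le_iff] at htri2
        rw [htw] at htri2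
        linarith [htri2.2]
      have hure : ((t : ℂ) * (z - ρ) + v).re ≤ t * (z - (ρ:ℂ)).re + t * ε := by
        have h1 : ((t : ℂ) * (z - ρ) + v).re = t * (z - (ρ:ℂ)).re + v.re := by
          simp [Complex.add_re, Complex.mul_re, Complex.ofReal_re, Complex.ofReal_im]
        have h2 : v.re ≤ ‖v‖ := Complex.re_le_norm v
        linarith
      have habs2 : ‖(t:ℂ) * (z - ρ) + v‖ ≤ t * (a + 2 * ε) := by nlinarith
      have hlo2 : t * (a / 2) ≤ ‖(t:ℂ) * (z - ρ) + v‖ := by nlinarith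
      refine ⟨?_, hlo2, habs2⟩
      rw [hUiff]
      have hsub2 : (ρ : ℂ) + (t : ℂ) * (z - ρ) + v - ρ = (t : ℂ) * (z - ρ) + v := by ring
      refine ⟨?_, ?_, ?_⟩
      · have := norm_add_le ((ρ : ℂ) + (t : ℂ) * (z - ρ)) v
        have h3 := norm_add_le ((ρ : ℂ)) ((t : ℂ) * (z - ρ))
        rw [Complex.norm_real, Real.norm_eq_abs, abs_of_pos hρ] at h3
        rw [htw] at h3
        nlinarith
      · rw [hsub2]
        -- cone condition
        have key' : (z - (ρ:ℂ)).re + ε < (‖z - (ρ:ℂ)‖ - ε) * Real.cos θ := by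
          nlinarith [mul_le_mul_of_nonneg_right hwa_lo hcospos.le]
        have key2 : t * (z - (ρ:ℂ)).re + t * ε < (t * ‖z - (ρ:ℂ)‖ - t * ε) * Real.cos θ := by
          nlinarith [mul_lt_mul_of_pos_left key' ht0]
        have h2 : (t * ‖z - (ρ:ℂ)‖ - t * ε) * Real.cos θ ≤
            ‖(t:ℂ) * (z - ρ) + v‖ * Real.cos θ :=
          mul_le_mul_of_nonneg_right hu_lo hcospos.le
        linarith
      · rw [hsub2]
        nlinarith
    have hballU : Metric.ball z₀ ε ⊆ uDomain ρ R θ r := by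
      intro z hzb
      have h := (hball z hzb 1 one_pos le_rfl 0 (by simpa using hε0.le)).1
      simpa using h
    set M : ℝ := max ((a / (2 * ρ)) ^ (-β)) (((a + 2 * ε) / ρ) ^ (-β)) with hM
    have hM0 : 0 < M := lt_max_of_lt_left (by positivity)
    -- Cauchy estimate for deriv S along the rays
    have hcauchy : ∀ z ∈ Metric.ball z₀ ε, ∀ t : ℝ, 0 < t → t ≤ 1 →
        ‖deriv S ((ρ : ℂ) + (t : ℂ) * (z - ρ))‖ ≤ C * M * t ^ (-β) / (t * ε) := by
      intro z hzb t ht0 ht1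
      set ζ : ℂ := (ρ : ℂ) + (t : ℂ) * (z - ρ) with hζ
      have hsubset : Metric.closedBall ζ (t * ε) ⊆ uDomain ρ R θ r := by
        intro p hp
        rw [Metric.mem_closedBall, Complex.dist_eq] at hp
        have h := (hball z hzb t ht0 ht1 (p - ζ) hp).1
        rwa [show (ρ : ℂ) + (t : ℂ) * (z - ρ) + (p - ζ) = p by rw [hζ]; ring] at h
      have hdc : DiffContOnCl ℂ S (Metric.ball ζ (t * ε)) :=
        (hdiff.mono (Metric.closure_ball_subset_closedBall.trans (hsubset.trans hUsub))).diffContOnCl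
      have hsp : ∀ p ∈ Metric.sphere ζ (t * ε), ‖S p‖ ≤ C * M * t ^ (-β) := by
        intro p hp
        rw [Metric.mem_sphere, Complex.dist_eq] at hp
        obtain ⟨hpU, hlo, hhi⟩ := hball z hzb t ht0 ht1 (p - ζ) hp.le
        have hpe : (ρ : ℂ) + (t : ℂ) * (z - ρ) + (p - ζ) = p := by rw [hζ]; ring
        rw [hpe] at hpU
        have hpw : (t : ℂ) * (z - ρ) + (p - ζ) = p - ρ := by rw [hζ]; ring
        rw [hpw] at hlo hhi
        have hq := hSband p hpU
        set q : ℝ := ‖p - (ρ:ℂ)‖ / ρ with hqdef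
        have hq1 : t * (a / (2 * ρ)) ≤ q := by
          rw [hqdef]
          rw [le_div_iff₀ hρ]
          calc t * (a / (2 * ρ)) * ρ = t * (a / 2) := by field_simp
          _ ≤ ‖p - (ρ:ℂ)‖ := hlo
        have hq2 : q ≤ t * ((a + 2 * ε) / ρ) := by
          rw [hqdef, div_le_iff₀ hρ]
          calc ‖p - (ρ:ℂ)‖ ≤ t * (a + 2 * ε) := hhi
          _ = t * ((a + 2 * ε) / ρ) * ρ := by field_simp
        have hqM : q ^ (-β) ≤ t ^ (-β) * M := by
          have hc₁ : (0:ℝ) < a / (2 * ρ) := by positivity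
          have hs1 : a / (2 * ρ) ≤ q / t := by
            rw [le_div_iff₀ ht0]
            linarith [hq1]
          have hs2 : q / t ≤ (a + 2 * ε) / ρ := by
            rw [div_le_iff₀ ht0]
            linarith [hq2]
          have hqeq : q = t * (q / t) := by field_simp
          rw [hqeq, Real.mul_rpow ht0.le (by positivity)]
          have hsM : (q / t) ^ (-β) ≤ M := by
            rcases le_or_gt 0 (-β) with hsign | hsign
            · exact le_trans (Real.rpow_le_rpow (le_trans hc₁.le hs1) hs2 hsign) (le_max_right _ _)
            · exact le_trans (Real.rpow_le_rpow_of_nonpos hc₁ hs1 hsign.le) (le_max_left _ _)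
          have : (0:ℝ) ≤ t ^ (-β) := Real.rpow_nonneg ht0.le _
          nlinarith [Real.rpow_nonneg (show (0:ℝ) ≤ q/t by positivity) (-β)]
        calc ‖S p‖ ≤ C * q ^ (-β) := hq
        _ ≤ C * (t ^ (-β) * M) := by nlinarith
        _ = C * M * t ^ (-β) := by ring
      have h := Complex.norm_deriv_le_of_forall_mem_sphere_norm_le (mul_pos ht0 hε0) hdc hsp
      exact h
    -- differentiation under the integral sign
    have hdom := intervalIntegral.hasDerivAt_integral_of_dominated_loc_of_deriv_le
      (F := F) (F' := F') (x₀ := z₀) (a := (0:ℝ)) (b := 1)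
      (s := Metric.ball z₀ ε) (bound := fun t => (C * M / ε) * t ^ (-β)) (Metric.ball_mem_nhds z₀ hε0)
      (Filter.eventually_of_mem (Metric.ball_mem_nhds z₀ hε0)
        (fun z hzm => hFmeas z (hballU hzm)))
      (hFint z₀ hz₀)
      ?_ ?_ ((intervalIntegral.intervalIntegrable_rpow' (by linarith)).const_mul _) ?_
    rotate_left
    · -- measurability of F' z₀
      rw [Set.uIoc_of_le (zero_le_one' ℝ)]
      apply ContinuousOn.aestronglyMeasurable _ measurableSet_Ioc
      apply ContinuousOn.mul
      · exact Complex.continuous_ofReal.continuousOn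
      · apply hderivS_cont.comp
        · exact (continuous_const.add (Complex.continuous_ofReal.mul continuous_const)).continuousOn
        · intro t ht
          exact hUsub (hray z₀ hz₀ t ht.1 ht.2)
    · -- bound for F'
      apply MeasureTheory.ae_of_all
      intro t ht z hzb
      rw [Set.uIoc_of_le (zero_le_one' ℝ)] at ht
      have hcz := hcauchy z hzb t ht.1 ht.2
      rw [hF']
      rw [norm_mul, Complex.norm_real, Real.norm_eq_abs, abs_of_pos ht.1]
      calc t * ‖deriv S ((ρ : ℂ) + (t : ℂ) * (z - ρ))‖ ≤ t * (C * M * t ^ (-β) / (t * ε)) := by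
            exact mul_le_mul_of_nonneg_left hcz ht.1.le
      _ = (C * M / ε) * t ^ (-β) := by
            field_simp [ht.1.ne']
    · -- differentiability in z
      apply MeasureTheory.ae_of_all
      intro t ht z hzb
      rw [Set.uIoc_of_le (zero_le_one' ℝ)] at ht
      have hζU : (ρ : ℂ) + (t : ℂ) * (z - ρ) ∈ uDomain ρ R θ r := by
        have h := (hball z hzb t ht.1 ht.2 0 (by simpa using (mul_pos ht.1 hε0).le)).1
        simpa using h
      have hSd : DifferentiableAt ℂ S ((ρ : ℂ) + (t : ℂ) * (z - ρ)) :=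
        hdiff.differentiableAt (hΔopen.mem_nhds (hUsub hζU))
      have hinner : HasDerivAt (fun y : ℂ => (ρ : ℂ) + (t : ℂ) * (y - ρ)) (t : ℂ) z := by
        have h := (((hasDerivAt_id z).sub_const ((ρ:ℂ))).const_mul ((t:ℂ))).const_add ((ρ:ℂ))
        simpa using h
      have := hSd.hasDerivAt.comp z hinner
      rw [mul_comm] at this
      exact this
    obtain ⟨hFi', hD⟩ := hdom
    -- FTC for g t = t * F z₀ t
    set g : ℝ → ℂ := fun t => (t : ℂ) * F z₀ t with hg
    have hgd : ∀ t ∈ Ioo (0:ℝ) 1, HasDerivAt g (F z₀ t + (z₀ - ρ) * F' z₀ t) t := by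
      intro t ht
      have hζU : (ρ : ℂ) + (t : ℂ) * (z₀ - ρ) ∈ uDomain ρ R θ r := hray z₀ hz₀ t ht.1 ht.2.le
      have hSd : DifferentiableAt ℂ S ((ρ : ℂ) + (t : ℂ) * (z₀ - ρ)) :=
        hdiff.differentiableAt (hΔopen.mem_nhds (hUsub hζU))
      have hinner : HasDerivAt (fun u : ℂ => (ρ : ℂ) + u * (z₀ - ρ)) (z₀ - ρ) ((t:ℝ):ℂ) := by
        have h := ((hasDerivAt_id ((t:ℝ):ℂ)).mul_const (z₀ - (ρ:ℂ))).const_add ((ρ:ℂ))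
        simpa using h
      have hcomp : HasDerivAt (fun u : ℂ => S ((ρ : ℂ) + u * (z₀ - ρ)))
          (deriv S ((ρ : ℂ) + (t : ℂ) * (z₀ - ρ)) * (z₀ - ρ)) ((t:ℝ):ℂ) :=
        hSd.hasDerivAt.comp ((t:ℝ):ℂ) hinner
      have hmul : HasDerivAt (fun u : ℂ => u * S ((ρ : ℂ) + u * (z₀ - ρ)))
          (1 * S ((ρ : ℂ) + (t : ℂ) * (z₀ - ρ)) +
            (t : ℂ) * (deriv S ((ρ : ℂ) + (t : ℂ) * (z₀ - ρ)) * (z₀ - ρ))) ((t:ℝ):ℂ) :=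
        (hasDerivAt_id _).mul hcomp
      have hreal := hmul.comp_ofReal
      have : (fun t : ℝ => ((t:ℂ)) * S ((ρ : ℂ) + (t:ℂ) * (z₀ - ρ))) = g := by
        funext s
        simp [hg, hF]
      rw [this] at hreal
      convert hreal using 1
      simp only [hF, hF']
      ring
    have hint : IntervalIntegrable (fun t => F z₀ t + (z₀ - ρ) * F' z₀ t)
        MeasureTheory.volume 0 1 := (hFint z₀ hz₀).add (hFi'.const_mul _)
    have hta : Filter.Tendsto g (nhdsWithin 0 (Ioi 0)) (nhds 0) := by
      apply squeeze_zero_norm'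
        (a := fun t => C * (‖z₀ - (ρ:ℂ)‖ / ρ) ^ (-β) * t ^ (1 - β))
      · filter_upwards [Ioo_mem_nhdsGT_of_mem
          (⟨le_refl (0:ℝ), zero_lt_one⟩ : (0:ℝ) ∈ Ico (0:ℝ) 1)] with t ht
        have hFb := hFbound z₀ hz₀ t ⟨ht.1, ht.2.le⟩
        rw [hg]
        rw [norm_mul, Complex.norm_real, Real.norm_eq_abs, abs_of_pos ht.1]
        calc t * ‖F z₀ t‖ ≤ t * (C * (‖z₀ - (ρ:ℂ)‖ / ρ) ^ (-β) * t ^ (-β)) := by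
              apply mul_le_mul_of_nonneg_left hFb ht.1.le
        _ = C * (‖z₀ - (ρ:ℂ)‖ / ρ) ^ (-β) * t ^ (1 - β) := by
              rw [show (1:ℝ) - β = 1 + (-β) by ring, Real.rpow_add ht.1, Real.rpow_one]
              ring
      · have h1 : Filter.Tendsto (fun t : ℝ => t ^ (1 - β)) (nhds 0) (nhds 0) := by
          have := (Real.continuousAt_rpow_const 0 (1 - β) (Or.inr (by linarith))).tendsto
          rwa [Real.zero_rpow (by linarith : (1:ℝ) - β ≠ 0)] at this
        have h2 := (h1.const_mul (C * (‖z₀ - (ρ:ℂ)‖ / ρ) ^ (-β))).mono_left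
          (nhdsWithin_le_nhds (s := Ioi (0:ℝ)))
        simpa using h2
    have htb : Filter.Tendsto g (nhdsWithin 1 (Iio 1)) (nhds (S z₀)) := by
      have hcg : ContinuousAt g 1 := by
        apply ContinuousAt.mul
        · exact Complex.continuous_ofReal.continuousAt
        · have hz₀Δ : z₀ ∈ deltaDomain ρ R θ := hUsub hz₀
          have hSd : DifferentiableAt ℂ S z₀ := hdiff.differentiableAt (hΔopen.mem_nhds hz₀Δ)
          have hic : ContinuousAt (fun t : ℝ => (ρ : ℂ) + (t : ℂ) * (z₀ - ρ)) 1 :=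
            (continuous_const.add (Complex.continuous_ofReal.mul continuous_const)).continuousAt
          have hSc' : ContinuousAt S ((ρ : ℂ) + ((1:ℝ) : ℂ) * (z₀ - ρ)) := by
            rw [show ((ρ : ℂ) + ((1:ℝ) : ℂ) * (z₀ - ρ)) = z₀ by push_cast; ring]
            exact hSd.continuousAt
          exact ContinuousAt.comp (g := S) (f := fun t : ℝ => (ρ : ℂ) + (t : ℂ) * (z₀ - ρ)) hSc' hic
      have := hcg.tendsto.mono_left (nhdsWithin_le_nhds (s := Iio (1:ℝ)))
      have hg1 : g 1 = S z₀ := by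
        have he : ((ρ:ℂ) + ((1:ℝ):ℂ) * (z₀ - ρ)) = z₀ := by push_cast; ring
        simp [hg, hF, he]
      rwa [hg1] at this
    have hftc := intervalIntegral.integral_eq_sub_of_hasDerivAt_of_tendsto zero_lt_one hgd hint
      hta htb
    rw [sub_zero] at hftc
    rw [intervalIntegral.integral_add (hFint z₀ hz₀) (hFi'.const_mul _),
      intervalIntegral.integral_const_mul] at hftc
    have hprod : HasDerivAt T₀
        (1 * (∫ t in (0:ℝ)..1, F z₀ t) + (z₀ - ρ) * ∫ t in (0:ℝ)..1, F' z₀ t) z₀ :=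
      ((hasDerivAt_id z₀).sub_const ((ρ:ℂ))).mul hD
    have heq : 1 * (∫ t in (0:ℝ)..1, F z₀ t) + (z₀ - ρ) * ∫ t in (0:ℝ)..1, F' z₀ t = S z₀ := by
      rw [one_mul]
      exact hftc
    rwa [heq] at hprod
  · -- the bound
    have h1β : (0:ℝ) < 1 - β := by linarith
    refine ⟨C * ρ / (1 - β), div_nonneg (by positivity) h1β.le, ?_⟩
    intro z hz
    obtain ⟨hzR, hzcone, hzr⟩ := (hUiff z).1 hz
    have hwne : z - (ρ : ℂ) ≠ 0 := by
      intro h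
      rw [h] at hzcone
      simp at hzcone
    set q : ℝ := ‖z - (ρ:ℂ)‖ with hq
    have hq0 : 0 < q := norm_pos_iff.mpr hwne
    have hIb : ‖∫ t in (0:ℝ)..1, F z t‖ ≤ C * (q / ρ) ^ (-β) * (1 / (1 - β)) := by
      have hbd : ∀ᵐ t ∂(MeasureTheory.volume.restrict (Set.uIoc (0:ℝ) 1)),
          ‖F z t‖ ≤ C * (q / ρ) ^ (-β) * t ^ (-β) := by
        rw [Set.uIoc_of_le (zero_le_one' ℝ), MeasureTheory.ae_restrict_iff' measurableSet_Ioc]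
        exact MeasureTheory.ae_of_all _ (fun t ht => hFbound z hz t ht)
      have h := intervalIntegral.norm_integral_le_of_norm_le zero_le_one
        ((MeasureTheory.ae_restrict_iff' measurableSet_Ioc).1 (by rwa [Set.uIoc_of_le (zero_le_one' ℝ)] at hbd))
        (hrpow_int.const_mul (C * (q / ρ) ^ (-β)))
      have hval : (∫ t in (0:ℝ)..1, C * (q / ρ) ^ (-β) * t ^ (-β)) =
          C * (q / ρ) ^ (-β) * (1 / (1 - β)) := by
        rw [intervalIntegral.integral_const_mul, integral_rpow (Or.inl (by linarith))]
        rw [Real.one_rpow, Real.zero_rpow (by linarith : -β + 1 ≠ 0)]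
        congr 1
        rw [show -β + 1 = 1 - β by ring]
        ring
      rw [hval] at h
      calc ‖∫ t in (0:ℝ)..1, F z t‖ ≤ |C * (q / ρ) ^ (-β) * (1 / (1 - β))| := h.trans (le_abs_self _)
      _ = C * (q / ρ) ^ (-β) * (1 / (1 - β)) := by
          apply _root_.abs_of_nonneg
          have h0 : (0:ℝ) ≤ (q / ρ) ^ (-β) := Real.rpow_nonneg (by positivity) _
          have h1 : (0:ℝ) ≤ 1 / (1 - β) := by positivity
          positivity
    have hsplit : (q / ρ) ^ (1 - β) = (q / ρ) * (q / ρ) ^ (-β) := by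
      rw [show (1:ℝ) - β = 1 + (-β) by ring, Real.rpow_add (by positivity), Real.rpow_one]
    rw [habs1 z, ← hq, hsplit]
    have hTz : ‖T₀ z‖ = q * ‖∫ t in (0:ℝ)..1, F z t‖ := by
      rw [hT]
      simp only [norm_mul]
      rw [← hq]
    rw [hTz]
    have hrp : (0:ℝ) ≤ (q / ρ) ^ (-β) := Real.rpow_nonneg (by positivity) _
    calc q * ‖∫ t in (0:ℝ)..1, F z t‖ ≤ q * (C * (q / ρ) ^ (-β) * (1 / (1 - β))) :=
          mul_le_mul_of_nonneg_left hIb hq0.le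
    _ = C * ρ / (1 - β) * (q / ρ * (q / ρ) ^ (-β)) := by
          field_simp
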